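/- Let w₁, w₂, w₃ be nonzero rationals and d₀, d₁ rationals; set d₂ = w₂ and d₃ = w₃. Define c_k = Σ_{i=0}^{k}(−1)^{k−i}e_i(d₀,d₁,d₂,d₃)h_{k−i}(w₁,w₂,w₃), s₀ = d₀d₁w₂w₃/(w₁w₂w₃), σ₃ = w₁w₂w₃, and the two invariant formulas A(w,d) = (s₀c₂ − 2c₁c₂ − 2c₃)/σ₃ (the #A₀A₁ formula) and Q(w,d) = (s₀³ − 6s₀²c₁ + 11s₀c₁² + 8s₀c₂ − 6c₁³ − 18c₁c₂ − 12c₃)/(24σ₃) (the #A₀⁴ formula). Moreover let T(w,d) = (s'₀² − 3s'₀c'₁ + 2c'₁² + 2c'₂)/(6w₁w₂) be the #A₀³ formula of the slice, where c'_k = Σ_{i=0}^{k}(−1)^{k−i}e_i(d₀,d₁,w₂)h_{k−i}(w₁,w₂) and s'₀ = d₀d₁/w₁. Then A(w,d) = T(w,d) · 6w₁/w₃. -/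

import Mathlib

/-!
The class `c_k = Σᵢ (-1)^(k-i) eᵢ(d) h_(k-i)(w)` is the degree-`k` coefficient of
`∏ (1 + dᵢ t) / ∏ (1 + wⱼ t)`, so the weights `w₂, w₃` shared by `d` and `w` cancel: for the
map and for its slice alike, `c` is the coefficient sequence of
`(1 + d₀ t)(1 + d₁ t)/(1 + w₁ t)`, that is `c₁ = d₀ + d₁ - w₁` and
`c_k = (-w₁)^(k-2) (d₀ - w₁)(d₁ - w₁)` for `k ≥ 2`. With these values, and
`s = s' = d₀ d₁ / w₁`, the relation is an identity of rational functions.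
-/

open Finset

/-- `esym w j` is the `j`-th elementary symmetric polynomial of `w`. -/
noncomputable def esym {n : ℕ} (w : Fin n → ℚ) (j : ℕ) : ℚ :=
  ∑ s ∈ Finset.univ.powersetCard j, ∏ i ∈ s, w i

/-- `hsym w m` is the complete homogeneous symmetric polynomial of degree `m` in `w`. -/
noncomputable def hsym {n : ℕ} (w : Fin n → ℚ) (m : ℕ) : ℚ :=
  ∑ s ∈ Finset.univ.sym m, (s.toMultiset.map w).prod

/-- virtual Chern class coefficient `c_k = Σ_{i=0}^k (-1)^{k-i} e_i(d) h_{k-i}(w)`. -/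
noncomputable def cc {n : ℕ} (w : Fin n → ℚ) (d : Fin (n+1) → ℚ) (k : ℕ) : ℚ :=
  ∑ i ∈ Finset.range (k+1), (-1)^(k-i) * esym d i * hsym w (k-i)

theorem Multiset.esymm_cons_succ {R : Type*} [CommSemiring R] (a : R) (s : Multiset R) (j : ℕ) :
    (a ::ₘ s).esymm (j + 1) = a * s.esymm j + s.esymm (j + 1) := by
  simp only [Multiset.esymm, Multiset.powersetCard_cons, Multiset.map_add, Multiset.sum_add,
    Multiset.map_map, Function.comp_def, Multiset.prod_cons, Multiset.sum_map_mul_left]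
  ring

theorem Sym.sum_prod_map_option_succ {R α : Type*} [CommSemiring R] [Fintype α] [DecidableEq α]
    (f : Option α → R) (m : ℕ) :
    ∑ s : Sym (Option α) (m + 1), (s.1.map f).prod =
      f none * ∑ s : Sym (Option α) m, (s.1.map f).prod +
        ∑ s : Sym α (m + 1), (s.1.map (f ∘ some)).prod := by
  rw [← (symOptionSuccEquiv (α := α) (n := m)).symm.sum_comp, Fintype.sum_sum_type,
    Finset.mul_sum]
  simp [symOptionSuccEquiv, SymOptionSuccEquiv.decode, Multiset.map_map, Sym.coe_cons]

theorem esym_zero {n : ℕ} (w : Fin n → ℚ) : esym w 0 = 1 := by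
  simp [esym]

theorem hsym_zero {n : ℕ} (w : Fin n → ℚ) : hsym w 0 = 1 := by
  simp [hsym, Sym.eq_nil_of_card_zero]

theorem esym_fin_zero_succ (w : Fin 0 → ℚ) (j : ℕ) : esym w (j + 1) = 0 := by
  rw [esym, powersetCard_eq_empty.2 (by simp), sum_empty]

theorem hsym_fin_zero_succ (w : Fin 0 → ℚ) (m : ℕ) : hsym w (m + 1) = 0 := by
  simp [hsym]

theorem esym_eq_multiset_esymm {n : ℕ} (w : Fin n → ℚ) (j : ℕ) :
    esym w j = (univ.val.map w).esymm j :=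
  (Finset.esymm_map_val w univ j).symm

theorem esym_vecCons_succ {n : ℕ} (a : ℚ) (w : Fin n → ℚ) (j : ℕ) :
    esym (Matrix.vecCons a w) (j + 1) = a * esym w j + esym w (j + 1) := by
  simp only [esym_eq_multiset_esymm, Fin.univ_val_map, List.ofFn_succ, Matrix.cons_val_zero,
    Matrix.cons_val_succ, ← Multiset.cons_coe, Multiset.esymm_cons_succ]

theorem hsym_eq_sum {n : ℕ} (w : Fin n → ℚ) (m : ℕ) :
    hsym w m = ∑ s : Sym (Fin n) m, (s.1.map w).prod := by
  rw [hsym, sym_univ]; rfl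

theorem hsym_vecCons_succ {n : ℕ} (a : ℚ) (w : Fin n → ℚ) (m : ℕ) :
    hsym (Matrix.vecCons a w) (m + 1) = a * hsym (Matrix.vecCons a w) m + hsym w (m + 1) := by
  have hsym_eq_sum_option : ∀ k, hsym (Matrix.vecCons a w) k =
      ∑ s : Sym (Option (Fin n)) k,
        (s.1.map (Matrix.vecCons a w ∘ (finSuccEquiv n).symm)).prod := by
    intro k
    rw [hsym_eq_sum, ← (Sym.equivCongr (finSuccEquiv n).symm).sum_comp]
    simp [Multiset.map_map]
  rw [hsym_eq_sum_option, hsym_eq_sum_option, Sym.sum_prod_map_option_succ, hsym_eq_sum]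
  simp [Function.comp_def]

section ChernClasses

variable (w1 w2 w3 d0 d1 : ℚ)

theorem cc_slice_one : cc ![w1, w2] ![d0, d1, w2] 1 = d0 + d1 - w1 := by
  simp only [cc, sum_range_succ, range_one, sum_singleton, Nat.reduceSub, esym_zero, hsym_zero,
    esym_vecCons_succ, hsym_vecCons_succ, esym_fin_zero_succ, hsym_fin_zero_succ]
  ring

theorem cc_slice_two : cc ![w1, w2] ![d0, d1, w2] 2 = (d0 - w1) * (d1 - w1) := by
  simp only [cc, sum_range_succ, range_one, sum_singleton, Nat.reduceSub, esym_zero, hsym_zero,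
    esym_vecCons_succ, hsym_vecCons_succ, esym_fin_zero_succ, hsym_fin_zero_succ]
  ring

theorem cc_map_one : cc ![w1, w2, w3] ![d0, d1, w2, w3] 1 = d0 + d1 - w1 := by
  simp only [cc, sum_range_succ, range_one, sum_singleton, Nat.reduceSub, esym_zero, hsym_zero,
    esym_vecCons_succ, hsym_vecCons_succ, esym_fin_zero_succ, hsym_fin_zero_succ]
  ring

theorem cc_map_two : cc ![w1, w2, w3] ![d0, d1, w2, w3] 2 = (d0 - w1) * (d1 - w1) := by
  simp only [cc, sum_range_succ, range_one, sum_singleton, Nat.reduceSub, esym_zero, hsym_zero,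
    esym_vecCons_succ, hsym_vecCons_succ, esym_fin_zero_succ, hsym_fin_zero_succ]
  ring

theorem cc_map_three : cc ![w1, w2, w3] ![d0, d1, w2, w3] 3 = -w1 * (d0 - w1) * (d1 - w1) := by
  simp only [cc, sum_range_succ, range_one, sum_singleton, Nat.reduceSub, esym_zero, hsym_zero,
    esym_vecCons_succ, hsym_vecCons_succ, esym_fin_zero_succ, hsym_fin_zero_succ]
  ring

end ChernClasses

theorem A0A1_slice (w1 w2 w3 d0 d1 : ℚ)
    (hw1 : w1 ≠ 0) (hw2 : w2 ≠ 0) (hw3 : w3 ≠ 0) :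
    let c := cc ![w1, w2, w3] ![d0, d1, w2, w3]
    let s := d0 * d1 * w2 * w3 / (w1 * w2 * w3)
    let A := (s * (c 2) - 2*(c 1)*(c 2) - 2*(c 3)) / (w1 * w2 * w3)
    let c' := cc ![w1, w2] ![d0, d1, w2]
    let s' := d0 * d1 / w1
    let T := (s'^2 - 3*s'*(c' 1) + 2*(c' 1)^2 + 2*(c' 2)) / (6 * (w1 * w2))
    A = T * (6 * w1 / w3) := by
  intro c s A c' s' T
  simp only [A, T, c, c', s, s', cc_map_one, cc_map_two, cc_map_three, cc_slice_one, cc_slice_two]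
  field_simp
  ring
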